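/- Sensibility of relational graph models: if a λ-term M is unsolvable (equivalently, has no head normal form) then its interpretation in any relational graph model is empty: no judgment Γ ⊢_D M : α is derivable. -/

import Mathlib

/-- Untyped λ⊥-terms in de Bruijn notation, intrinsically scoped:
`Tm n` is the set of λ⊥-terms with free variables among `x₀,…,x_{n-1}`. -/
inductive Tm : ℕ → Type
  | var : ∀ {n : ℕ}, Fin n → Tm n
  | lam : ∀ {n : ℕ}, Tm (n + 1) → Tm n
  | app : ∀ {n : ℕ}, Tm n → Tm n → Tm n
  | bot : ∀ {n : ℕ}, Tm n

/-- Renaming of free variables. -/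
def Tm.rename : ∀ {n m : ℕ}, (Fin n → Fin m) → Tm n → Tm m
  | _, _, f, .var k => .var (f k)
  | _, m, f, .lam t =>
      .lam (t.rename fun k => Fin.cases (motive := fun _ => Fin (m + 1)) 0
        (fun j => (f j).succ) k)
  | _, _, f, .app t u => .app (t.rename f) (u.rename f)
  | _, _, _, .bot => .bot

/-- Simultaneous (capture-avoiding) substitution. -/
def Tm.subst : ∀ {n m : ℕ}, (Fin n → Tm m) → Tm n → Tm m
  | _, _, σ, .var k => σ k
  | _, m, σ, .lam t =>
      .lam (t.subst fun k => Fin.cases (motive := fun _ => Tm (m + 1)) (.var 0)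
        (fun j => (σ j).rename Fin.succ) k)
  | _, _, σ, .app t u => .app (t.subst σ) (u.subst σ)
  | _, _, _, .bot => .bot

/-- Substitution `M{N/y}` of `N` for the 0-th free variable of `M`. -/
def Tm.subst1 {n : ℕ} (M : Tm (n + 1)) (N : Tm n) : Tm n :=
  M.subst (Fin.cases (motive := fun _ => Tm n) N Tm.var)

/-- One-step β-reduction (contextual closure of `(λx.M)N → M{N/x}`). -/
inductive Beta : ∀ {n : ℕ}, Tm n → Tm n → Prop
  | redex {n} (M : Tm (n + 1)) (N : Tm n) : Beta (.app (.lam M) N) (M.subst1 N)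
  | appL {n} {M M' N : Tm n} : Beta M M' → Beta (.app M N) (.app M' N)
  | appR {n} {M N N' : Tm n} : Beta N N' → Beta (.app M N) (.app M N')
  | lam {n} {M M' : Tm (n + 1)} : Beta M M' → Beta (.lam M) (.lam M')

/-- A λ⊥-term is a λ-term when it contains no occurrence of `⊥`. -/
def BotFree : ∀ {n : ℕ}, Tm n → Prop
  | _, .var _ => True
  | _, .lam M => BotFree M
  | _, .app M N => BotFree M ∧ BotFree N
  | _, .bot => False

/-- The environment assigning the multiset `[α]` to the variable `k` and `0` elsewhere. -/
def single {D : Type} {n : ℕ} (k : Fin n) (α : D) : Fin n → Multiset D :=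
  fun j => if j = k then {α} else 0

/-- The relational interpretation `⟦M⟧_{x̄} ⊆ M_f(D)ⁿ × D` of a λ⊥-term in a relational
graph model `(D, i)`. -/
def Interp {D : Type} (i : Multiset D × D → D) :
    ∀ {n : ℕ}, Tm n → Set ((Fin n → Multiset D) × D)
  | _, .var k => {p | ∃ α, p = (single k α, α)}
  | _, .lam M => {p | ∃ Γ a α, (Fin.cons a Γ, α) ∈ Interp i M ∧ p = (Γ, i (a, α))}
  | n, .app M N =>
      {p | ∃ (Γ₀ : Fin n → Multiset D) (l : List ((Fin n → Multiset D) × D)),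
        (Γ₀, i (↑(l.map Prod.snd), p.2)) ∈ Interp i M ∧
        (∀ q ∈ l, q ∈ Interp i N) ∧ p.1 = Γ₀ + (l.map Prod.fst).sum}
  | _, .bot => ∅

/-- The non-idempotent intersection type system associated with a relational graph model
`(D, i)`: `Der i Γ M α m` states that the judgment `Γ ⊢ M : α` is derivable by a
derivation `π` with `#app(π) = m` occurrences of the application rule. -/
inductive Der {D : Type} (i : Multiset D × D → D) :
    ∀ {n : ℕ}, (Fin n → Multiset D) → Tm n → D → ℕ → Prop
  | var {n} (k : Fin n) (α : D) : Der i (single k α) (.var k) α 0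
  | lam {n} {Γ : Fin n → Multiset D} {a : Multiset D} {M : Tm (n + 1)} {α : D} {m : ℕ} :
      Der i (Fin.cons a Γ) M α m → Der i Γ (.lam M) (i (a, α)) m
  | app {n} {Γ : Fin n → Multiset D} {M N : Tm n} {α : D} {m : ℕ}
      (l : List ((Fin n → Multiset D) × D × ℕ)) :
      Der i Γ M (i (↑(l.map fun q => q.2.1), α)) m →
      (∀ q ∈ l, Der i q.1 N q.2.1 q.2.2) →
      Der i (Γ + (l.map fun q => q.1).sum) (.app M N) α
        (m + (l.map fun q => q.2.2).sum + 1)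

/-- `IsHead M`: `M` is an application spine headed by a variable. -/
inductive IsHead : ∀ {n : ℕ}, Tm n → Prop
  | var {n} (k : Fin n) : IsHead (.var k)
  | app {n} {M N : Tm n} : IsHead M → IsHead (.app M N)

/-- `IsHnf M`: `M` is a head normal form `λx₁…x_n. x_i M₁ ⋯ M_k`. -/
inductive IsHnf : ∀ {n : ℕ}, Tm n → Prop
  | head {n} {M : Tm n} : IsHead M → IsHnf M
  | lam {n} {M : Tm (n + 1)} : IsHnf M → IsHnf (.lam M)

/-!
Non-idempotent typing is quantitative. Substituting, for each occurrence of a type of `xₖ`,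
one derivation of `σ k` adds up the contexts and the numbers of application rules, so
contracting a head redex `(λx.P) N` in a typed term — injectivity of `i` identifies the types
expected for `x` with those derived for `N` — gives a derivation with exactly one application
rule fewer. Head reduction of a typable term therefore terminates, in a head normal form, and
it keeps ⊥-free terms ⊥-free; so a typable λ-term is solvable.
-/

section Contexts
variable {D : Type} {i : Multiset D × D → D} {n m : ℕ}

lemma single_eq_pi_single (k : Fin n) (α : D) : single k α = Pi.single k {α} := by
  funext j; rw [Pi.single_apply]; rfl

lemma multiset_sum_map_single (k : Fin n) (a : Multiset D) :
    (a.map (single k)).sum = Pi.single k a := by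
  induction a using Multiset.induction_on with
  | empty => simp
  | cons β a ih => rw [Multiset.map_cons, Multiset.sum_cons, ih, single_eq_pi_single,
      ← Pi.single_add, Multiset.singleton_add]

lemma extend_single {ρ : Fin n → Fin m} (hρ : ρ.Injective) (k : Fin n) (α : D) :
    Function.extend ρ (single k α) 0 = single (ρ k) α := by
  funext j
  by_cases hj : ∃ k', ρ k' = j
  · obtain ⟨k', rfl⟩ := hj
    simp [hρ.extend_apply, single, hρ.eq_iff]
  · rw [Function.extend_apply' _ _ _ hj]
    simp only [single, Pi.zero_apply]
    rw [if_neg (fun h => hj ⟨k, h.symm⟩)]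

lemma lift_injective {ρ : Fin n → Fin m} (hρ : ρ.Injective) :
    (fun k => Fin.cases (motive := fun _ => Fin (m + 1)) 0 (fun j => (ρ j).succ) k).Injective :=
  Fin.cons_injective_iff.mpr ⟨by simp [Fin.succ_ne_zero], (Fin.succ_injective m).comp hρ⟩

lemma extend_lift_cons {ρ : Fin n → Fin m} (hρ : ρ.Injective) (a : Multiset D)
    (Γ : Fin n → Multiset D) :
    Function.extend (fun k => Fin.cases (motive := fun _ => Fin (m + 1)) 0 (fun j => (ρ j).succ) k)
      (Fin.cons a Γ : Fin (n + 1) → Multiset D) 0 = Fin.cons a (Function.extend ρ Γ 0) := by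
  funext j
  cases j using Fin.cases with
  | zero => exact (lift_injective hρ).extend_apply _ _ 0
  | succ j =>
    by_cases hj : ∃ k, ρ k = j
    · obtain ⟨k, rfl⟩ := hj
      simp only [Fin.cons_succ, hρ.extend_apply]
      exact (lift_injective hρ).extend_apply _ _ k.succ
    · rw [Fin.cons_succ, Function.extend_apply' _ _ _ hj, Function.extend_apply', Pi.zero_apply,
        Pi.zero_apply]
      rintro ⟨k, hk⟩
      cases k using Fin.cases with
      | zero => exact Fin.succ_ne_zero j hk.symm
      | succ k => exact hj ⟨k, Fin.succ_injective m hk⟩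

lemma extend_add_list_sum (ρ : Fin n → Fin m) (Γ : Fin n → Multiset D)
    (L : List (Fin n → Multiset D)) :
    Function.extend ρ (Γ + L.sum) 0 =
      Function.extend ρ Γ 0 + (L.map (Function.extend ρ · 0)).sum := by
  change Function.ExtendByZero.hom (Multiset D) ρ (Γ + L.sum) = _
  rw [map_add, map_list_sum]
  rfl

lemma extend_succ (Γ : Fin n → Multiset D) :
    Function.extend Fin.succ Γ 0 = Fin.cons 0 Γ := by
  funext j
  cases j using Fin.cases with
  | zero => exact Function.extend_apply' _ _ _ fun ⟨k, hk⟩ => Fin.succ_ne_zero k hk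
  | succ j => exact (Fin.succ_injective n).extend_apply _ _ j

theorem Der.rename {Γ : Fin n → Multiset D} {M : Tm n} {α : D} {p : ℕ}
    (h : Der i Γ M α p) {ρ : Fin n → Fin m} (hρ : ρ.Injective) :
    Der i (Function.extend ρ Γ 0) (M.rename ρ) α p := by
  induction h generalizing m with
  | var k α => rw [extend_single hρ]; exact .var (ρ k) α
  | lam _ ih =>
    have := ih (lift_injective hρ)
    rw [extend_lift_cons hρ] at this
    exact .lam this
  | app l _ _ ihM ihN =>
    have happ := Der.app (i := i) (l.map fun q => (Function.extend ρ q.1 0, q.2))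
      (by simpa [Function.comp_def] using ihM hρ)
      (by simp only [List.mem_map]; rintro _ ⟨q, hq, rfl⟩; exact ihN q hq hρ)
    rw [extend_add_list_sum]
    simpa [Function.comp_def, Tm.rename] using happ

end Contexts

lemma Multiset.exists_eq_add_of_map_eq_add {γ β : Type*} (f : γ → β) {t : Multiset γ}
    {a b : Multiset β} (h : t.map f = a + b) :
    ∃ t₁ t₂, t = t₁ + t₂ ∧ t₁.map f = a ∧ t₂.map f = b := by
  induction a using Multiset.induction_on generalizing t with
  | empty => exact ⟨0, t, by simp, by simp, by simpa using h⟩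
  | cons x a ih =>
    obtain ⟨y, hy, rfl⟩ := Multiset.mem_map.mp (h ▸ by simp : x ∈ t.map f)
    obtain ⟨t', rfl⟩ := Multiset.exists_cons_of_mem hy
    rw [Multiset.map_cons, Multiset.cons_add, Multiset.cons_inj_right] at h
    obtain ⟨t₁, t₂, rfl, rfl, rfl⟩ := ih h
    exact ⟨y ::ₘ t₁, t₂, by simp, by simp, rfl⟩

section Substitution
variable {D : Type} {i : Multiset D × D → D} {n m : ℕ}

/-- A triple `(Δ, β, p)` stands for a derivation of `Δ ⊢ σ k : β` with `p` application rules;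
`F k` holds one such derivation for each element of the multiset `Γ k`. -/
def TypedSubst (i : Multiset D × D → D) (σ : Fin n → Tm m) (Γ : Fin n → Multiset D)
    (F : Fin n → Multiset ((Fin m → Multiset D) × D × ℕ)) : Prop :=
  ∀ k, (F k).map (fun q => q.2.1) = Γ k ∧ ∀ q ∈ F k, Der i q.1 (σ k) q.2.1 q.2.2

def totalCtx (F : Fin n → Multiset ((Fin m → Multiset D) × D × ℕ)) : Fin m → Multiset D :=
  ∑ k, ((F k).map Prod.fst).sum

def totalApps (F : Fin n → Multiset ((Fin m → Multiset D) × D × ℕ)) : ℕ :=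
  ∑ k, ((F k).map fun q => q.2.2).sum

variable {σ : Fin n → Tm m} {Γ Δ : Fin n → Multiset D}
  {F G : Fin n → Multiset ((Fin m → Multiset D) × D × ℕ)}

lemma totalCtx_add : totalCtx (F + G) = totalCtx F + totalCtx G := by
  simp [totalCtx, Finset.sum_add_distrib]

lemma totalApps_add : totalApps (F + G) = totalApps F + totalApps G := by
  simp [totalApps, Finset.sum_add_distrib]

lemma totalCtx_pi_single (k : Fin n) (s : Multiset ((Fin m → Multiset D) × D × ℕ)) :
    totalCtx (Pi.single k s) = (s.map Prod.fst).sum :=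
  (Fintype.sum_eq_single k fun j hj => by simp [hj]).trans (by simp)

lemma totalApps_pi_single (k : Fin n) (s : Multiset ((Fin m → Multiset D) × D × ℕ)) :
    totalApps (Pi.single k s) = (s.map fun q => q.2.2).sum :=
  (Fintype.sum_eq_single k fun j hj => by simp [hj]).trans (by simp)

lemma totalCtx_cons (s : Multiset ((Fin m → Multiset D) × D × ℕ))
    (F : Fin n → Multiset ((Fin m → Multiset D) × D × ℕ)) :
    totalCtx (Fin.cons s F : Fin (n + 1) → _) = (s.map Prod.fst).sum + totalCtx F := by
  simp [totalCtx, Fin.sum_univ_succ]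

lemma totalApps_cons (s : Multiset ((Fin m → Multiset D) × D × ℕ))
    (F : Fin n → Multiset ((Fin m → Multiset D) × D × ℕ)) :
    totalApps (Fin.cons s F : Fin (n + 1) → _) = (s.map fun q => q.2.2).sum + totalApps F := by
  simp [totalApps, Fin.sum_univ_succ]

lemma TypedSubst.exists_add (hF : TypedSubst i σ (Γ + Δ) F) :
    ∃ G H, F = G + H ∧ TypedSubst i σ Γ G ∧ TypedSubst i σ Δ H := by
  choose G H hsplit hG hH using fun k =>
    Multiset.exists_eq_add_of_map_eq_add _ ((hF k).1.trans rfl)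
  refine ⟨G, H, funext hsplit, fun k => ⟨hG k, fun q hq => ?_⟩, fun k => ⟨hH k, fun q hq => ?_⟩⟩
  · exact (hF k).2 q (by rw [hsplit k]; exact Multiset.mem_add.mpr (.inl hq))
  · exact (hF k).2 q (by rw [hsplit k]; exact Multiset.mem_add.mpr (.inr hq))

lemma TypedSubst.eq_zero (hF : TypedSubst i σ 0 F) : F = 0 :=
  funext fun k => Multiset.map_eq_zero.mp (hF k).1

lemma TypedSubst.eq_pi_single {k : Fin n} {α : D} (hF : TypedSubst i σ (single k α) F) :
    ∃ q, F = Pi.single k {q} ∧ q.2.1 = α ∧ Der i q.1 (σ k) α q.2.2 := by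
  have hk : (F k).map (fun q => q.2.1) = {α} := by simpa [single] using (hF k).1
  obtain ⟨q, hq, rfl⟩ := Multiset.map_eq_singleton.mp hk
  refine ⟨q, funext fun j => ?_, rfl, (hF k).2 q (by simp [hq])⟩
  by_cases hj : j = k
  · subst hj; simp [hq]
  · rw [Pi.single_eq_of_ne hj]
    exact Multiset.map_eq_zero.mp ((hF j).1.trans (by simp [single, hj]))

lemma totalCtx_map_extend {k : ℕ} (ρ : Fin m → Fin k) :
    totalCtx (fun j => (F j).map fun q => (Function.extend ρ q.1 0, q.2)) =
      Function.extend ρ (totalCtx F) 0 := by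
  change _ = Function.ExtendByZero.hom (Multiset D) ρ (totalCtx F)
  simp only [totalCtx, map_sum, map_multiset_sum, Multiset.map_map]
  rfl

lemma totalApps_map_extend {k : ℕ} (ρ : Fin m → Fin k) :
    totalApps (fun j => (F j).map fun q => (Function.extend ρ q.1 0, q.2)) = totalApps F := by
  simp [totalApps, Multiset.map_map]

lemma TypedSubst.exists_list {N : Tm n} {H : Fin n → Multiset ((Fin m → Multiset D) × D × ℕ)}
    (l : List ((Fin n → Multiset D) × D × ℕ))
    (hl : ∀ q ∈ l, ∀ H, TypedSubst i σ q.1 H →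
      Der i (totalCtx H) (N.subst σ) q.2.1 (q.2.2 + totalApps H))
    (hH : TypedSubst i σ (l.map fun q => q.1).sum H) :
    ∃ l' : List ((Fin m → Multiset D) × D × ℕ),
      (l'.map fun q => q.2.1) = (l.map fun q => q.2.1) ∧
      (l'.map fun q => q.1).sum = totalCtx H ∧
      (l'.map fun q => q.2.2).sum = (l.map fun q => q.2.2).sum + totalApps H ∧
      ∀ q ∈ l', Der i q.1 (N.subst σ) q.2.1 q.2.2 := by
  induction l generalizing H with
  | nil =>
    obtain rfl := TypedSubst.eq_zero hH
    exact ⟨[], by simp, by simp [totalCtx], by simp [totalApps], by simp⟩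
  | cons q l ih =>
    rw [List.map_cons, List.sum_cons] at hH
    obtain ⟨G, H, rfl, hG, hH⟩ := hH.exists_add
    obtain ⟨l', htypes, hctx, happs, hder⟩ := ih (fun r hr => hl r (by simp [hr])) hH
    refine ⟨(totalCtx G, q.2.1, q.2.2 + totalApps G) :: l', by simp [htypes], ?_, ?_, ?_⟩
    · simp [hctx, totalCtx_add]
    · simp only [List.map_cons, List.sum_cons, happs, totalApps_add]
      omega
    · exact List.forall_mem_cons.mpr ⟨hl q (by simp) G hG, hder⟩

def varTypings (k : Fin n) (a : Multiset D) : Multiset ((Fin n → Multiset D) × D × ℕ) :=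
  a.map fun β => (single k β, β, 0)

@[simp] lemma varTypings_types (k : Fin n) (a : Multiset D) :
    (varTypings k a).map (fun q => q.2.1) = a := by
  simp [varTypings, Multiset.map_map]

@[simp] lemma varTypings_ctx (k : Fin n) (a : Multiset D) :
    ((varTypings k a).map Prod.fst).sum = Pi.single k a := by
  simpa [varTypings, Multiset.map_map] using multiset_sum_map_single k a

@[simp] lemma varTypings_apps (k : Fin n) (a : Multiset D) :
    ((varTypings k a).map fun q => q.2.2).sum = 0 := by
  simp [varTypings, Multiset.map_map]

lemma der_of_mem_varTypings {k : Fin n} {a : Multiset D} {q} (hq : q ∈ varTypings k a) :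
    Der i q.1 (.var k) q.2.1 q.2.2 := by
  obtain ⟨β, -, rfl⟩ := Multiset.mem_map.mp hq
  exact .var k β

lemma pi_single_zero_add_cons (a : Multiset D) (Γ : Fin n → Multiset D) :
    Pi.single 0 a + Fin.cons 0 Γ = (Fin.cons a Γ : Fin (n + 1) → Multiset D) := by
  funext j
  cases j using Fin.cases <;> simp [Fin.succ_ne_zero]

theorem Der.subst {Γ : Fin n → Multiset D} {M : Tm n} {α : D} {p : ℕ} (h : Der i Γ M α p)
    {m : ℕ} {σ : Fin n → Tm m} {F : Fin n → Multiset ((Fin m → Multiset D) × D × ℕ)}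
    (hF : TypedSubst i σ Γ F) : Der i (totalCtx F) (M.subst σ) α (p + totalApps F) := by
  induction h generalizing m with
  | var k α =>
    obtain ⟨q, rfl, -, hq⟩ := hF.eq_pi_single
    rw [totalCtx_pi_single, totalApps_pi_single]
    simpa [Tm.subst] using hq
  | @lam n Γ a M α p _ ih =>
    let F' : Fin (n + 1) → Multiset ((Fin (m + 1) → Multiset D) × D × ℕ) :=
      Fin.cons (varTypings 0 a) fun j => (F j).map fun q => (Function.extend Fin.succ q.1 0, q.2)
    have hF' :
        TypedSubst i (Fin.cons (.var 0) fun j => (σ j).rename Fin.succ) (Fin.cons a Γ) F' := by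
      intro k
      cases k using Fin.cases with
      | zero => exact ⟨varTypings_types 0 a, fun q hq => der_of_mem_varTypings hq⟩
      | succ j =>
        refine ⟨by simpa [F', Multiset.map_map] using (hF j).1, fun q hq => ?_⟩
        obtain ⟨r, hr, rfl⟩ := Multiset.mem_map.mp hq
        exact ((hF j).2 r hr).rename (Fin.succ_injective m)
    have := ih hF'
    rw [totalCtx_cons, totalApps_cons, totalCtx_map_extend, totalApps_map_extend,
      varTypings_ctx, varTypings_apps, extend_succ, pi_single_zero_add_cons, zero_add] at this
    exact .lam this
  | @app n Γ M N α p l _ _ ihM ihN =>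
    obtain ⟨G, H, rfl, hG, hH⟩ := hF.exists_add
    obtain ⟨l', htypes, hctx, happs, hder⟩ := hH.exists_list l (fun q hq _ => ihN q hq)
    have happ : Der i _ ((M.app N).subst σ) α _ := .app l' (by rw [htypes]; exact ihM hG) hder
    rw [hctx, happs] at happ
    rw [totalCtx_add, totalApps_add]
    convert happ using 1
    omega

end Substitution

section HeadReduction
variable {D : Type} {i : Multiset D × D → D} {n : ℕ}

lemma Der.lam_inv {Γ : Fin n → Multiset D} {P : Tm (n + 1)} {δ : D} {p : ℕ}
    (h : Der i Γ (.lam P) δ p) : ∃ a α, δ = i (a, α) ∧ Der i (Fin.cons a Γ) P α p := by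
  cases h with | lam h => exact ⟨_, _, rfl, h⟩

theorem Der.subst1_of_app_lam (hi : i.Injective) {Γ : Fin n → Multiset D} {P : Tm (n + 1)}
    {N : Tm n} {α : D} {m : ℕ} (h : Der i Γ (.app (.lam P) N) α m) :
    ∃ m' < m, Der i Γ (P.subst1 N) α m' := by
  cases h with
  | @app _ Γ _ _ _ p l hlam hN =>
    obtain ⟨a, β, hab, hP⟩ := hlam.lam_inv
    obtain ⟨rfl, rfl⟩ := Prod.mk.inj (hi hab)
    let F : Fin (n + 1) → Multiset ((Fin n → Multiset D) × D × ℕ) :=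
      Fin.cons ↑l fun j => varTypings j (Γ j)
    have hF : TypedSubst i (Fin.cons N Tm.var) (Fin.cons ↑(l.map fun q => q.2.1) Γ) F := by
      intro k
      cases k using Fin.cases with
      | zero => exact ⟨by simp [F], hN⟩
      | succ j => exact ⟨varTypings_types j (Γ j), fun q hq => der_of_mem_varTypings hq⟩
    have := hP.subst hF
    rw [totalCtx_cons, totalApps_cons] at this
    simp only [totalCtx, totalApps, varTypings_ctx, varTypings_apps, Finset.univ_sum_single,
      Finset.sum_const_zero, add_zero, Multiset.map_coe, Multiset.sum_coe] at this
    exact ⟨_, by omega, add_comm Γ _ ▸ this⟩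

theorem Der.isHnf_or_exists_beta (hi : i.Injective) {Γ : Fin n → Multiset D} {M : Tm n}
    {α : D} {m : ℕ} (h : Der i Γ M α m) :
    IsHnf M ∨ ∃ M' m', Beta M M' ∧ Der i Γ M' α m' ∧ m' < m := by
  induction h with
  | var k α => exact .inl (.head (.var k))
  | lam _ ih =>
    rcases ih with hnf | ⟨M', m', hβ, hM', hlt⟩
    · exact .inl hnf.lam
    · exact .inr ⟨_, m', hβ.lam, hM'.lam, hlt⟩
  | app l hM hN ihM =>
    rcases ihM with hnf | ⟨M', m', hβ, hM', hlt⟩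
    · cases hnf with
      | head hd => exact .inl (.head hd.app)
      | lam =>
        obtain ⟨m', hlt, hd⟩ := (hM.app l hN).subst1_of_app_lam hi
        exact .inr ⟨_, m', .redex _ _, hd, hlt⟩
    · exact .inr ⟨_, _, hβ.appL, hM'.app l hN, by omega⟩

theorem Der.exists_reflTransGen_isHnf (hi : i.Injective) {Γ : Fin n → Multiset D} {M : Tm n}
    {α : D} {m : ℕ} (h : Der i Γ M α m) :
    ∃ N, Relation.ReflTransGen Beta M N ∧ IsHnf N := by
  induction m using Nat.strong_induction_on generalizing M with
  | _ m ih =>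
    rcases h.isHnf_or_exists_beta hi with hnf | ⟨M', m', hβ, hM', hlt⟩
    · exact ⟨M, .refl, hnf⟩
    · obtain ⟨N, hMN, hN⟩ := ih m' hlt hM'
      exact ⟨N, .head hβ hMN, hN⟩

end HeadReduction

section BotFree
variable {n : ℕ}

lemma BotFree.rename {M : Tm n} (h : BotFree M) {m : ℕ} (ρ : Fin n → Fin m) :
    BotFree (M.rename ρ) := by
  induction M generalizing m with
  | var k => trivial
  | lam M ih => exact ih h _
  | app M N ihM ihN => exact ⟨ihM h.1 ρ, ihN h.2 ρ⟩
  | bot => exact h.elim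

lemma BotFree.subst {M : Tm n} (h : BotFree M) {m : ℕ} {σ : Fin n → Tm m}
    (hσ : ∀ k, BotFree (σ k)) : BotFree (M.subst σ) := by
  induction M generalizing m with
  | var k => exact hσ k
  | lam M ih =>
    refine ih h fun k => ?_
    cases k using Fin.cases with
    | zero => trivial
    | succ j => exact (hσ j).rename Fin.succ
  | app M N ihM ihN => exact ⟨ihM h.1 hσ, ihN h.2 hσ⟩
  | bot => exact h.elim

lemma Beta.botFree {M M' : Tm n} (hβ : Beta M M') (h : BotFree M) : BotFree M' := by
  induction hβ with
  | redex P N =>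
    refine BotFree.subst (M := P) h.1 fun k => ?_
    cases k using Fin.cases with
    | zero => exact h.2
    | succ j => trivial
  | appL _ ih => exact ⟨ih h.1, h.2⟩
  | appR _ ih => exact ⟨h.1, ih h.2⟩
  | lam _ ih => exact ih h

lemma BotFree.of_reflTransGen {M N : Tm n} (h : BotFree M)
    (hMN : Relation.ReflTransGen Beta M N) : BotFree N := by
  induction hMN with
  | refl => exact h
  | tail _ hβ ih => exact hβ.botFree ih

end BotFree

theorem stmt_14_general {D : Type} (i : Multiset D × D → D)
    (hi : Function.Injective i) {n : ℕ} (M : Tm n) (hM : BotFree M)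
    (huns : ¬ ∃ N : Tm n, BotFree N ∧
      Relation.EqvGen (fun a b : Tm n => Beta a b) M N ∧ IsHnf N) :
    ∀ (Γ : Fin n → Multiset D) (α : D) (m : ℕ), ¬ Der i Γ M α m := by
  intro Γ α m hder
  obtain ⟨N, hMN, hN⟩ := hder.exists_reflTransGen_isHnf hi
  exact huns ⟨N, hM.of_reflTransGen hMN, Relation.EqvGen.reflTransGen_le_eqvGen _ M N hMN, hN⟩

/-- Sensibility of relational graph models: an unsolvable λ-term (one with no head
normal form) has empty interpretation — no typing judgment for it is derivable. -/
theorem stmt_14 {D : Type} [Infinite D] (i : Multiset D × D → D)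
    (hi : Function.Injective i) {n : ℕ} (M : Tm n) (hM : BotFree M)
    (huns : ¬ ∃ N : Tm n, BotFree N ∧
      Relation.EqvGen (fun a b : Tm n => Beta a b) M N ∧ IsHnf N) :
    ∀ (Γ : Fin n → Multiset D) (α : D) (m : ℕ), ¬ Der i Γ M α m :=
  stmt_14_general i hi M hM huns
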